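/- For distinct nonzero points λ₁,…,λ_K in (0,1] with K ≤ n, the K×n matrix M with entries M_{kj} = λ_k·T_{2j+1}(λ_k) (j = 0,…,n−1) has rank K; equivalently, the Gram matrix G = M Mᵀ with entries G_{ij} = λ_i λ_j Σ_{ℓ=0}^{n−1} T_{2ℓ+1}(λ_i)T_{2ℓ+1}(λ_j) is positive definite. -/

import Mathlib

open Polynomial Polynomial.Chebyshev Matrix

private lemma two_smul_X_mul_T (m : ℤ) :
    (2:ℝ) • ((X : ℝ[X]) * T ℝ (m+1)) = T ℝ (m+2) + T ℝ m := by
  have h := T_add_two ℝ m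
  rw [smul_eq_C_mul]
  rw [map_ofNat]
  linear_combination -h

private lemma mem_of_two_smul_mem {W : Submodule ℝ ℝ[X]} {v : ℝ[X]}
    (h : (2:ℝ) • v ∈ W) : v ∈ W := by
  have hv : v = (2⁻¹ : ℝ) • ((2:ℝ) • v) := by rw [smul_smul]; norm_num
  rw [hv]; exact W.smul_mem _ h

private lemma X_mul_mem_of_mem_span {s : Set ℝ[X]} {W : Submodule ℝ ℝ[X]} {p : ℝ[X]}
    (hp : p ∈ Submodule.span ℝ s) (h : ∀ q ∈ s, (X:ℝ[X]) * q ∈ W) :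
    (X:ℝ[X]) * p ∈ W := by
  induction hp using Submodule.span_induction with
  | mem q hq => exact h q hq
  | zero => simpa using W.zero_mem
  | add a b _ _ ha hb => rw [mul_add]; exact W.add_mem ha hb
  | smul r a _ ha => rw [mul_smul_comm]; exact W.smul_mem r ha

private lemma pow_mem_span_aux (m : ℕ) :
    ((X:ℝ[X])^(2*m) ∈ Submodule.span ℝ ((fun j : ℕ => T ℝ (2*(j:ℤ))) '' Set.Iic m)) ∧
    ((X:ℝ[X])^(2*m+1) ∈ Submodule.span ℝ ((fun j : ℕ => T ℝ (2*(j:ℤ)+1)) '' Set.Iic m)) := by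
  induction m with
  | zero =>
    constructor
    · refine Submodule.subset_span ⟨0, Set.mem_Iic.mpr le_rfl, ?_⟩
      simp [T_zero]
    · refine Submodule.subset_span ⟨0, Set.mem_Iic.mpr le_rfl, ?_⟩
      simp [T_one]
  | succ m ih =>
    obtain ⟨hE, hO⟩ := ih
    have hE' : (X:ℝ[X])^(2*(m+1)) ∈
        Submodule.span ℝ ((fun j : ℕ => T ℝ (2*(j:ℤ))) '' Set.Iic (m+1)) := by
      have hmul : (X:ℝ[X]) * (X:ℝ[X])^(2*m+1) ∈
          Submodule.span ℝ ((fun j : ℕ => T ℝ (2*(j:ℤ))) '' Set.Iic (m+1)) := by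
        refine X_mul_mem_of_mem_span hO ?_
        rintro _ ⟨j, hj, rfl⟩
        apply mem_of_two_smul_mem
        have h1 : (2:ℝ) • ((X:ℝ[X]) * T ℝ (2*(j:ℤ)+1)) = T ℝ (2*(j:ℤ)+2) + T ℝ (2*(j:ℤ)) :=
          two_smul_X_mul_T (2*(j:ℤ))
        rw [h1]
        refine Submodule.add_mem _ ?_ ?_
        · refine Submodule.subset_span ⟨j+1,
            Set.mem_Iic.mpr (Nat.succ_le_succ (Set.mem_Iic.mp hj)), ?_⟩
          congr 1
        · exact Submodule.subset_span ⟨j, le_trans hj (Nat.le_succ m), rfl⟩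
      have hpow : (X:ℝ[X])^(2*(m+1)) = (X:ℝ[X]) * (X:ℝ[X])^(2*m+1) := by ring
      rw [hpow]; exact hmul
    refine ⟨hE', ?_⟩
    have hmul : (X:ℝ[X]) * (X:ℝ[X])^(2*(m+1)) ∈
        Submodule.span ℝ ((fun j : ℕ => T ℝ (2*(j:ℤ)+1)) '' Set.Iic (m+1)) := by
      refine X_mul_mem_of_mem_span hE' ?_
      rintro _ ⟨j, hj, rfl⟩
      apply mem_of_two_smul_mem
      have h1 : (2:ℝ) • ((X:ℝ[X]) * T ℝ (2*(j:ℤ))) = T ℝ (2*(j:ℤ)+1) + T ℝ (2*(j:ℤ)-1) := by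
        have := two_smul_X_mul_T (2*(j:ℤ)-1)
        have e1 : 2*(j:ℤ)-1+1 = 2*(j:ℤ) := by ring
        have e2 : 2*(j:ℤ)-1+2 = 2*(j:ℤ)+1 := by ring
        rw [e1, e2] at this
        exact this
      rw [h1]
      refine Submodule.add_mem _ ?_ ?_
      · exact Submodule.subset_span ⟨j, hj, rfl⟩
      · rcases j with _ | j
        · refine Submodule.subset_span ⟨0, Set.mem_Iic.mpr (Nat.zero_le _), ?_⟩
          norm_num [T_one, T_neg_one]
        · refine Submodule.subset_span ⟨j,
            Set.mem_Iic.mpr (by have := Set.mem_Iic.mp hj; omega), ?_⟩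
          show T ℝ (2*(j:ℤ)+1) = T ℝ (2*((j+1:ℕ):ℤ)-1)
          congr 1
          omega
    have hpow : (X:ℝ[X])^(2*(m+1)+1) = (X:ℝ[X]) * (X:ℝ[X])^(2*(m+1)) := by ring
    rw [hpow]; exact hmul

private lemma odd_pow_mem_span (n m : ℕ) (hm : m < n) :
    (X:ℝ[X])^(2*m+1) ∈
      Submodule.span ℝ (Set.range fun j : Fin n => T ℝ (2*(j:ℤ)+1)) := by
  refine Submodule.span_mono ?_ ((pow_mem_span_aux m).2)
  rintro _ ⟨j, hj, rfl⟩
  exact ⟨⟨j, lt_of_le_of_lt hj hm⟩, rfl⟩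

private lemma key_indep (K n : ℕ) (hKn : K ≤ n) (lam : Fin K → ℝ)
    (hdist : Function.Injective lam) (hmem : ∀ k, lam k ∈ Set.Ioc (0:ℝ) 1)
    (c : Fin K → ℝ)
    (hc : ∀ j : Fin n, ∑ k, c k * (lam k * (T ℝ (2*(j:ℤ)+1)).eval (lam k)) = 0) :
    c = 0 := by
  set L : ℝ[X] →ₗ[ℝ] ℝ := ∑ k, (c k * lam k) • Polynomial.leval (lam k) with hL
  have hLgen : ∀ j : Fin n, L (T ℝ (2*(j:ℤ)+1)) = 0 := by
    intro j
    have := hc j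
    simp only [hL, LinearMap.sum_apply, LinearMap.smul_apply, leval_apply, smul_eq_mul]
    calc ∑ k, c k * lam k * (T ℝ (2*(j:ℤ)+1)).eval (lam k)
        = ∑ k, c k * (lam k * (T ℝ (2*(j:ℤ)+1)).eval (lam k)) := by
          exact Finset.sum_congr rfl fun k _ => by ring
      _ = 0 := hc j
  have hspan : Submodule.span ℝ (Set.range fun j : Fin n => T ℝ (2*(j:ℤ)+1)) ≤
      LinearMap.ker L := by
    rw [Submodule.span_le]
    rintro _ ⟨j, rfl⟩
    exact hLgen j
  have hpow : ∀ m, m < n → ∑ k, c k * lam k * (lam k)^(2*m+1) = 0 := by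
    intro m hm
    have hmem' := hspan (odd_pow_mem_span n m hm)
    have : L ((X:ℝ[X])^(2*m+1)) = 0 := hmem'
    simpa [hL, LinearMap.sum_apply, leval_apply] using this
  set μ : Fin K → ℝ := fun k => (lam k)^2 with hμ
  set d : Fin K → ℝ := fun k => c k * (lam k)^2 with hd
  have hμinj : Function.Injective μ := by
    intro a b hab
    apply hdist
    have ha := (hmem a).1
    have hb := (hmem b).1
    have habs : |lam a| = |lam b| := by
      rw [← Real.sqrt_sq_eq_abs, ← Real.sqrt_sq_eq_abs]
      simp only [hμ] at hab
      rw [hab]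
    rwa [abs_of_pos ha, abs_of_pos hb] at habs
  have hmv : (Matrix.vandermonde μ)ᵀ *ᵥ d = 0 := by
    funext m
    have h0 := hpow m (lt_of_lt_of_le m.isLt hKn)
    simp only [Matrix.mulVec, dotProduct, Matrix.transpose_apply, Matrix.vandermonde_apply,
      Pi.zero_apply]
    calc ∑ k, μ k ^ (m:ℕ) * d k
        = ∑ k, c k * lam k * (lam k)^(2*(m:ℕ)+1) := by
          refine Finset.sum_congr rfl fun k _ => ?_
          simp only [hμ, hd]
          ring
      _ = 0 := h0
  have hunit : IsUnit ((Matrix.vandermonde μ)ᵀ) := by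
    rw [Matrix.isUnit_iff_isUnit_det, Matrix.det_transpose, isUnit_iff_ne_zero]
    exact Matrix.det_vandermonde_ne_zero_iff.mpr hμinj
  have hdzero : d = 0 := by
    have hinj := Matrix.mulVec_injective_iff_isUnit.mpr hunit
    apply hinj
    rw [hmv, Matrix.mulVec_zero]
  funext k
  have hk : c k * (lam k)^2 = 0 := by
    have := congrFun hdzero k
    simpa [hd] using this
  have hpos : (0:ℝ) < (lam k)^2 := pow_pos (hmem k).1 2
  have := mul_eq_zero.mp hk
  simpa [hpos.ne'] using this

/-- For distinct points in `(0,1]` with `K ≤ n`, the matrix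
`M_{kj} = λ_k T_{2j+1}(λ_k)` has full row rank `K`, and the Gram matrix
`G = M Mᵀ` is positive definite. -/
theorem constraint_matrix_full_rank
    (K n : ℕ) (hKn : K ≤ n)
    (lam : Fin K → ℝ) (hdist : Function.Injective lam)
    (hmem : ∀ k, lam k ∈ Set.Ioc (0 : ℝ) 1) :
    letI M : Matrix (Fin K) (Fin n) ℝ :=
      fun k j => lam k * (Polynomial.Chebyshev.T ℝ (2 * (j : ℤ) + 1)).eval (lam k)
    M.rank = K ∧ (M * M.transpose).PosDef := by
  set M : Matrix (Fin K) (Fin n) ℝ :=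
    fun k j => lam k * (Polynomial.Chebyshev.T ℝ (2 * (j : ℤ) + 1)).eval (lam k) with hM
  have hind : ∀ x : Fin K → ℝ, x ᵥ* M = 0 → x = 0 := by
    intro x hx
    refine key_indep K n hKn lam hdist hmem x ?_
    intro j
    have := congrFun hx j
    simpa [Matrix.vecMul, dotProduct, hM, mul_assoc] using this
  have hMT : Mᵀ = Mᴴ := by
    ext i j
    simp [Matrix.conjTranspose_apply]
  have hP : (M * Mᵀ).PosDef := by
    refine Matrix.PosDef.of_dotProduct_mulVec_pos ?_ ?_
    · rw [hMT]
      exact Matrix.isHermitian_mul_conjTranspose_self M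
    · intro x hx
      have hval : star x ⬝ᵥ ((M * Mᵀ) *ᵥ x) = (x ᵥ* M) ⬝ᵥ (x ᵥ* M) := by
        rw [star_trivial, ← Matrix.mulVec_mulVec, Matrix.dotProduct_mulVec,
          Matrix.mulVec_transpose]
      rw [hval]
      have hw : x ᵥ* M ≠ 0 := fun h => hx (hind x h)
      obtain ⟨j, hj⟩ := Function.ne_iff.mp hw
      simp only [dotProduct]
      refine Finset.sum_pos' (fun i _ => mul_self_nonneg _) ⟨j, Finset.mem_univ j, ?_⟩
      exact mul_self_pos.mpr (by simpa using hj)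
  refine ⟨?_, hP⟩
  have hunit : IsUnit (M * Mᵀ) := by
    rw [Matrix.isUnit_iff_isUnit_det]
    exact (hP.det_pos).ne'.isUnit
  have h1 : (M * Mᵀ).rank = K := by
    rw [Matrix.rank_of_isUnit _ hunit, Fintype.card_fin]
  refine le_antisymm ?_ ?_
  · simpa using M.rank_le_card_height
  · calc K = (M * Mᵀ).rank := h1.symm
      _ ≤ M.rank := Matrix.rank_mul_le_left M Mᵀ
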